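/- arXiv:2601.09219 — 2 statements merged into one kernel-verified Lean document; each statement's English description precedes it below -/
import Mathlib

section
/- Let T be a tree rooted at r with a shadow-closed link set E, and let F ⊆ E be a shadows-minimal feasible cover of T. Let v ≠ r be a vertex such that the subtree T_v has exactly three leaves a, b, c, where a and b are the two children of a stem s ∈ T_v with twin link ab, and suppose T_v is c-closed. If ab ∈ F, then Σ_{x ∈ T_v ∖ L} deg_F(x) ≥ 2. -/
open scoped Classical

/-- The set of tree edges lying on a path (necessarily the unique one in a tree)
between `u` and `v`. -/
def pathEdges {V : Type*} (T : SimpleGraph V) (u v : V) : Set (Sym2 V) :=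
  {e | ∃ p : T.Walk u v, p.IsPath ∧ e ∈ p.edges}

/-- The set of vertices lying on a path between `u` and `v`. -/
def pathSupport {V : Type*} (T : SimpleGraph V) (u v : V) : Set V :=
  {w | ∃ p : T.Walk u v, p.IsPath ∧ w ∈ p.support}

/-- The link `l` covers the tree edge `e` : `e` lies on the tree path between the
endpoints of `l`. -/
def Covers {V : Type*} (T : SimpleGraph V) (l e : Sym2 V) : Prop :=
  ∃ u v, l = s(u, v) ∧ e ∈ pathEdges T u v

/-- A set `F` of links covers the tree `T` (is feasible): every edge of `T` is covered
by some link of `F`. -/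
def CoversTree {V : Type*} (T : SimpleGraph V) (F : Set (Sym2 V)) : Prop :=
  ∀ e ∈ T.edgeSet, ∃ l ∈ F, Covers T l e

/-- `x` belongs to the subtree `T_v` of `T` rooted at `r`:
`v` lies on the tree path from `x` to the root `r`. -/
def InSubtree {V : Type*} (T : SimpleGraph V) (r v x : V) : Prop :=
  v ∈ pathSupport T x r

/-- A leaf is a vertex with exactly one neighbour (degree one). -/
def IsLeaf {V : Type*} (T : SimpleGraph V) (v : V) : Prop :=
  ∃! w, T.Adj v w

/-- `y` is the parent of `x` in the tree `T` rooted at `r`. -/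
def IsParent {V : Type*} (T : SimpleGraph V) (r x y : V) : Prop :=
  T.Adj x y ∧ InSubtree T r y x

/-- `w` is the least common ancestor of `u` and `v` in the tree `T` rooted at `r`. -/
def IsLCA {V : Type*} (T : SimpleGraph V) (r u v w : V) : Prop :=
  w ∈ pathSupport T u v ∧ w ∈ pathSupport T u r ∧ w ∈ pathSupport T v r

/-- The link `cd` is a shadow of the link `ab`: the tree path between `c` and `d` is a
strict subpath of the tree path between `a` and `b`. -/
def IsShadow {V : Type*} (T : SimpleGraph V) (c d a b : V) : Prop :=
  c ≠ d ∧ pathEdges T c d ⊂ pathEdges T a b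

/-- The link set `E` is shadow-closed: every shadow of a link of `E` belongs to `E`. -/
def ShadowClosed {V : Type*} (T : SimpleGraph V) (E : Finset (Sym2 V)) : Prop :=
  ∀ a b c d, s(a, b) ∈ E → IsShadow T c d a b → s(c, d) ∈ E

/-- `F ⊆ E` is a shadows-minimal feasible solution: it is a minimum-cardinality cover of
`T` among subsets of `E`, and replacing any link of `F` by one of its shadows renders it
infeasible. -/
def ShadowsMinimal {V : Type*} (T : SimpleGraph V) (E F : Finset (Sym2 V)) : Prop :=
  F ⊆ E ∧ CoversTree T ↑F ∧
    (∀ F' : Finset (Sym2 V), F' ⊆ E → CoversTree T ↑F' → F.card ≤ F'.card) ∧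
    ∀ a b c d, s(a, b) ∈ F → IsShadow T c d a b →
      ¬ CoversTree T ↑(insert s(c, d) (F.erase s(a, b)))

/-- `deg_F(x)`: the number of links of `F` incident to `x`. -/
noncomputable def degF {V : Type*} (F : Finset (Sym2 V)) (x : V) : ℕ :=
  (F.filter (fun e => x ∈ e)).card

/-- `s` is a stem with twin link `ab`: an internal vertex whose children are exactly the
two leaves `a` and `b`, with `ab ∈ E`. -/
def IsStem {V : Type*} (T : SimpleGraph V) (r : V) (E : Finset (Sym2 V)) (s a b : V) : Prop :=
  a ≠ b ∧ ¬ IsLeaf T s ∧ IsLeaf T a ∧ IsLeaf T b ∧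
    IsParent T r a s ∧ IsParent T r b s ∧
    (∀ x, IsParent T r x s → x = a ∨ x = b) ∧ s(a, b) ∈ E

/-- The subtree `T_v` is `x`-closed: every link of `E` incident to `x` has both endpoints
in `T_v`. -/
def XClosed {V : Type*} (T : SimpleGraph V) (r : V) (E : Finset (Sym2 V)) (v x : V) : Prop :=
  ∀ l ∈ E, x ∈ l → ∀ y ∈ l, InSubtree T r v y

/-- The subtree `T_v` is leaf-closed: it is `x`-closed for every leaf `x ∈ L_v`. -/
def LeafClosed {V : Type*} (T : SimpleGraph V) (r : V) (E : Finset (Sym2 V)) (v : V) : Prop :=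
  ∀ x, IsLeaf T x → InSubtree T r v x → XClosed T r E v x

/-- The subtree `T_v` is minimally leaf-closed: it is leaf-closed and no subtree rooted
at a strict descendant of `v` is leaf-closed. -/
def MinLeafClosed {V : Type*} (T : SimpleGraph V) (r : V) (E : Finset (Sym2 V)) (v : V) : Prop :=
  LeafClosed T r E v ∧ ∀ u, InSubtree T r v u → u ≠ v → ¬ LeafClosed T r E u

/-- `ax` is an up-link of the leaf `a`: a link of `E` incident to `a` whose least common
ancestor with `a` is closest to the root among all links of `E` incident to `a`. -/
def IsUpLink {V : Type*} (T : SimpleGraph V) (r : V) (E : Finset (Sym2 V)) (a x : V) : Prop :=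
  s(a, x) ∈ E ∧ ∀ y w w', s(a, y) ∈ E → IsLCA T r a x w → IsLCA T r a y w' →
    T.dist w r ≤ T.dist w' r

/-- A matching: a set of links (pairs of distinct vertices) no two of which share an
endpoint. -/
def IsMatching {V : Type*} (M : Finset (Sym2 V)) : Prop :=
  (∀ l ∈ M, ¬ l.IsDiag) ∧ ∀ l ∈ M, ∀ l' ∈ M, l ≠ l' → ∀ x, x ∈ l → x ∉ l'

open SimpleGraph

section helpers
variable {V : Type*} {T : SimpleGraph V}

lemma st6_exists_path (hc : T.Connected) (u v : V) : ∃ p : T.Walk u v, p.IsPath :=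
  (hc.preconnected u v).elim fun w => ⟨w.toPath.1, w.toPath.2⟩

lemma st6_pathEdges_eq (hT : T.IsTree) {u v : V} {p : T.Walk u v} (hp : p.IsPath) :
    pathEdges T u v = {e | e ∈ p.edges} := by
  ext e
  constructor
  · rintro ⟨q, hq, he⟩
    have h := hT.IsAcyclic.path_unique ⟨q, hq⟩ ⟨p, hp⟩
    have : q = p := congrArg Subtype.val h
    exact this ▸ he
  · intro he; exact ⟨p, hp, he⟩

lemma st6_pathEdges_symm (u v : V) : pathEdges T u v = pathEdges T v u := by
  have h : ∀ x y : V, pathEdges T x y ⊆ pathEdges T y x := by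
    rintro x y e ⟨p, hp, he⟩
    exact ⟨p.reverse, hp.reverse, by simpa [Walk.edges_reverse] using he⟩
  exact le_antisymm (h u v) (h v u)

lemma st6_snd {u v : V} (w : T.Walk u v) (h : u ≠ v) : ∃ x, T.Adj u x ∧ x ∈ w.support.tail := by
  cases w with
  | nil => exact absurd rfl h
  | cons h' w' => exact ⟨_, h', by simp⟩

lemma st6_leaf_not_interior {a s u v : V} (hnb : ∀ w, T.Adj a w → w = s)
    {p : T.Walk u v} (hp : p.IsPath) (ha : a ∈ p.support) (hu : u ≠ a) (hv : v ≠ a) : False := by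
  obtain ⟨x, hx, hxm⟩ := st6_snd (p.dropUntil a ha) (Ne.symm hv)
  obtain ⟨y, hy, hym⟩ := st6_snd (p.takeUntil a ha).reverse (Ne.symm hu)
  have hxs := hnb x hx
  have hys := hnb y hy
  have hnd := hp.support_nodup
  rw [← Walk.take_spec p ha, Walk.support_append] at hnd
  have hdisj := List.disjoint_of_nodup_append hnd
  have h1 : s ∈ (p.takeUntil a ha).support := by
    rw [← hys]
    have := List.mem_of_mem_tail hym
    rwa [Walk.support_reverse, List.mem_reverse] at this
  have h2 : s ∈ (p.dropUntil a ha).support.tail := hxs ▸ hxm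
  exact hdisj h1 h2

lemma st6_leaf_pathEdges (hT : T.IsTree) {a s u : V} (hadj : T.Adj a s)
    (hnb : ∀ w, T.Adj a w → w = s) (hu : u ≠ a) :
    pathEdges T a u = insert s(a, s) (pathEdges T s u) ∧ s(a, s) ∉ pathEdges T s u := by
  obtain ⟨q, hq⟩ := st6_exists_path hT.isConnected s u
  have haq : a ∉ q.support := fun h =>
    st6_leaf_not_interior hnb hq h (Ne.symm hadj.ne) hu
  have hpath : (Walk.cons hadj q).IsPath := hq.cons haq
  have h1 := st6_pathEdges_eq hT hpath
  have h2 := st6_pathEdges_eq hT hq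
  refine ⟨?_, ?_⟩
  · rw [h1, h2]; ext e; simp [Set.mem_insert_iff]
  · rw [h2]; intro he; exact haq (q.fst_mem_support_of_mem_edges he)

lemma st6_cover_pendant {a pa u w : V} (hnb : ∀ x, T.Adj a x → x = pa)
    (hmem : s(a, pa) ∈ pathEdges T u w) : u = a ∨ w = a := by
  obtain ⟨p, hp, he⟩ := hmem
  by_contra hcon
  push_neg at hcon
  exact st6_leaf_not_interior hnb hp (p.fst_mem_support_of_mem_edges he) hcon.1 hcon.2

lemma st6_insubtree_of_side (hT : T.IsTree) {r v pv x : V} (hadj : T.Adj v pv)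
    {pr' : T.Walk pv r} (hpr' : pr'.IsPath) (hvpr : v ∉ pr'.support)
    {q : T.Walk x v} (hq : q.IsPath) (he : s(v, pv) ∉ q.edges) :
    v ∈ pathSupport T x r := by
  have hdisj : ∀ z ∈ q.support, z ∉ pr'.support := by
    intro z hz hz'
    have hd : (q.dropUntil z hz).IsPath := hq.dropUntil hz
    have ht : (Walk.cons hadj (pr'.takeUntil z hz')).IsPath :=
      (hpr'.takeUntil hz').cons (fun h => hvpr (pr'.support_takeUntil_subset hz' h))
    have hueq := hT.IsAcyclic.path_unique
      ⟨(Walk.cons hadj (pr'.takeUntil z hz')).reverse, ht.reverse⟩ ⟨q.dropUntil z hz, hd⟩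
    have heq : (Walk.cons hadj (pr'.takeUntil z hz')).reverse = q.dropUntil z hz :=
      congrArg Subtype.val hueq
    have hmem : s(v, pv) ∈ (q.dropUntil z hz).edges := by
      rw [← heq]; simp [Walk.edges_reverse]
    exact he (q.edges_dropUntil_subset hz hmem)
  have hw : (q.append (Walk.cons hadj pr')).IsPath := by
    rw [Walk.isPath_def, Walk.support_append]
    have h : (Walk.cons hadj pr').support.tail = pr'.support := by simp
    rw [h]
    exact List.Nodup.append hq.support_nodup hpr'.support_nodup hdisj
  exact ⟨_, hw, by rw [Walk.mem_support_append_iff]; exact Or.inl q.end_mem_support⟩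

lemma st6_not_insubtree_of_side (hT : T.IsTree) {r v pv x : V} (hadj : T.Adj v pv)
    {pr' : T.Walk pv r} (hpr' : pr'.IsPath) (hvpr : v ∉ pr'.support)
    (he : s(v, pv) ∈ pathEdges T v x) : v ∉ pathSupport T x r := by
  rintro ⟨p, hp, hvp⟩
  obtain ⟨qe, hqe, heq⟩ := he
  have ht : (p.takeUntil v hvp).IsPath := hp.takeUntil hvp
  have h1 : (p.takeUntil v hvp).reverse = qe :=
    congrArg Subtype.val (hT.IsAcyclic.path_unique ⟨(p.takeUntil v hvp).reverse, ht.reverse⟩ ⟨qe, hqe⟩)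
  have hetake : s(v, pv) ∈ (p.takeUntil v hvp).edges := by
    have : s(v, pv) ∈ (p.takeUntil v hvp).reverse.edges := h1 ▸ heq
    simpa [Walk.edges_reverse] using this
  have hd : (p.dropUntil v hvp).IsPath := hp.dropUntil hvp
  have h2 : Walk.cons hadj pr' = p.dropUntil v hvp :=
    congrArg Subtype.val (hT.IsAcyclic.path_unique ⟨Walk.cons hadj pr', hpr'.cons hvpr⟩
      ⟨p.dropUntil v hvp, hd⟩)
  have hedrop : s(v, pv) ∈ (p.dropUntil v hvp).edges := by rw [← h2]; simp
  have hnd : p.edges.Nodup := Walk.edges_nodup_of_support_nodup hp.support_nodup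
  rw [← Walk.take_spec p hvp, Walk.edges_append] at hnd
  exact (List.disjoint_of_nodup_append hnd) hetake hedrop

lemma st6_no_extra (hT : T.IsTree) {E F : Finset (Sym2 V)} (hF : ShadowsMinimal T E F)
    {a b s : V} (habF : s(a, b) ∈ F) (hadj : T.Adj a s)
    (hnb : ∀ w, T.Adj a w → w = s) (hts : s(a, s) ∈ pathEdges T a b)
    {z : V} (hza : z ≠ a) (hzs : z ≠ s) (hzb : z ≠ b) (hlz : s(a, z) ∈ F) : False := by
  obtain ⟨hPE, hPnot⟩ := st6_leaf_pathEdges hT hadj hnb hza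
  have hshadow : IsShadow T s z a z := ⟨Ne.symm hzs, by rw [hPE]; exact Set.ssubset_insert hPnot⟩
  have hne : s(a, b) ≠ s(a, z) := by
    intro h
    rw [Sym2.eq_iff] at h
    rcases h with ⟨_, h2⟩ | ⟨h1, _⟩
    · exact hzb h2.symm
    · exact hza h1.symm
  apply hF.2.2.2 a z s z hlz hshadow
  intro e he
  obtain ⟨l, hl, hcov⟩ := hF.2.1 e he
  rw [Finset.mem_coe] at hl
  by_cases hla : l = s(a, z)
  · obtain ⟨u', v', hluv, hemem⟩ := hcov
    rw [hla, Sym2.eq_iff] at hluv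
    have hemem' : e ∈ pathEdges T a z := by
      rcases hluv with ⟨h1, h2⟩ | ⟨h1, h2⟩
      · rw [← h1, ← h2] at hemem; exact hemem
      · rw [← h1, ← h2] at hemem; rwa [st6_pathEdges_symm] at hemem
    rw [hPE, Set.mem_insert_iff] at hemem'
    rcases hemem' with rfl | hm
    · refine ⟨s(a, b), ?_, a, b, rfl, hts⟩
      rw [Finset.mem_coe]
      exact Finset.mem_insert_of_mem (Finset.mem_erase.mpr ⟨hne, habF⟩)
    · exact ⟨s(s, z), by rw [Finset.mem_coe]; exact Finset.mem_insert_self _ _, s, z, rfl, hm⟩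
  · exact ⟨l, by rw [Finset.mem_coe]; exact Finset.mem_insert_of_mem (Finset.mem_erase.mpr ⟨hla, hl⟩), hcov⟩

end helpers

/-- if `T_v` (`v ≠ r`) has exactly three leaves `a, b, c`, where `a, b` are
the children of a stem `s ∈ T_v` with twin link `ab`, and `T_v` is `c`-closed, then
`ab ∈ F` implies `Σ_{x ∈ T_v ∖ L} deg_F(x) ≥ 2`. -/
theorem statement6 {V : Type*} [Fintype V] (T : SimpleGraph V) (hT : T.IsTree) (r : V)
    (hr : ¬ IsLeaf T r) (E F : Finset (Sym2 V))
    (hlinks : ∀ l ∈ E, ¬ l.IsDiag)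
    (hE : ShadowClosed T E)
    (hF : ShadowsMinimal T E F)
    (v : V) (hv : v ≠ r) (a b c s : V)
    (hab : a ≠ b) (hac : a ≠ c) (hbc : b ≠ c)
    (hleaves : ∀ x, (IsLeaf T x ∧ InSubtree T r v x) ↔ (x = a ∨ x = b ∨ x = c))
    (hstem : IsStem T r E s a b) (hsv : InSubtree T r v s)
    (hclosed : XClosed T r E v c) :
    s(a, b) ∈ F →
      2 ≤ ∑ x : V, (if InSubtree T r v x ∧ ¬ IsLeaf T x then degF F x else 0) := by
  intro habF
  obtain ⟨hab', hsNL, hleafa, hleafb, hpa, hpb, hchild, habE⟩ := hstem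
  have hnba : ∀ w, T.Adj a w → w = s := by
    obtain ⟨w0, _, hu⟩ := hleafa
    intro w hw; rw [hu w hw, hu s hpa.1]
  have hnbb : ∀ w, T.Adj b w → w = s := by
    obtain ⟨w0, _, hu⟩ := hleafb
    intro w hw; rw [hu w hw, hu s hpb.1]
  have hca : IsLeaf T c ∧ InSubtree T r v c := (hleaves c).mpr (Or.inr (Or.inr rfl))
  have haa : IsLeaf T a ∧ InSubtree T r v a := (hleaves a).mpr (Or.inl rfl)
  have hbb : IsLeaf T b ∧ InSubtree T r v b := (hleaves b).mpr (Or.inr (Or.inl rfl))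
  obtain ⟨pc, hadjc, hnbc⟩ := hca.1
  have hsa : a ≠ s := hpa.1.ne
  have hsb : s ≠ b := fun h => hsNL (h ▸ hbb.1)
  have hsc : s ≠ c := fun h => hsNL (h ▸ hca.1)
  have hadjsb : T.Adj s b := hpb.1.symm
  have hadjsa : T.Adj s a := hpa.1.symm
  have hwab : (Walk.cons hpa.1 (Walk.cons hadjsb Walk.nil)).IsPath := by
    rw [Walk.isPath_def]
    simp [hsa, hab, hsb]
  have hts : s(a, s) ∈ pathEdges T a b := ⟨_, hwab, by simp⟩
  have hwba : (Walk.cons hpb.1 (Walk.cons hadjsa Walk.nil)).IsPath := by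
    rw [Walk.isPath_def]
    simp [hpb.1.ne, hab.symm, hsa.symm]
  have htsb : s(b, s) ∈ pathEdges T b a := ⟨_, hwba, by simp⟩
  have habF' : s(b, a) ∈ F := by rw [Sym2.eq_swap]; exact habF
  -- Step 1: the link covering c's pendant edge
  obtain ⟨l1, hl1F, hl1cov⟩ := hF.2.1 s(c, pc) hadjc
  rw [Finset.mem_coe] at hl1F
  obtain ⟨u1, w1, hl1eq, hmem1⟩ := hl1cov
  have hy : ∃ y, l1 = s(c, y) := by
    rcases st6_cover_pendant hnbc hmem1 with rfl | rfl
    · exact ⟨w1, hl1eq⟩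
    · exact ⟨u1, hl1eq.trans Sym2.eq_swap⟩
  obtain ⟨y, hl1y⟩ := hy
  have hcl1 : c ∈ l1 := by rw [hl1y]; exact Sym2.mem_mk_left c y
  have hyl1 : y ∈ l1 := by rw [hl1y]; exact Sym2.mem_mk_right c y
  have hyT : InSubtree T r v y := hclosed l1 (hF.1 hl1F) hcl1 y hyl1
  have hyc : y ≠ c := by
    intro h
    apply hlinks l1 (hF.1 hl1F)
    rw [hl1y, h]
    exact Sym2.mk_isDiag_iff.mpr rfl
  have hl1cF : s(c, y) ∈ F := hl1y ▸ hl1F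
  have hya : y ≠ a := by
    intro h
    refine st6_no_extra hT hF habF hpa.1 hnba hts (z := c)
      (Ne.symm hac) (Ne.symm hsc) (Ne.symm hbc) ?_
    have h2 : s(a, c) = s(c, y) := by rw [h]; exact Sym2.eq_swap
    rw [h2]; exact hl1cF
  have hyb : y ≠ b := by
    intro h
    refine st6_no_extra hT hF habF' hpb.1 hnbb htsb (z := c)
      (Ne.symm hbc) (Ne.symm hsc) (Ne.symm hac) ?_
    have h2 : s(b, c) = s(c, y) := by rw [h]; exact Sym2.eq_swap
    rw [h2]; exact hl1cF
  have hyNL : ¬ IsLeaf T y := by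
    intro h
    rcases (hleaves y).mp ⟨h, hyT⟩ with h1 | h1 | h1
    exacts [hya h1, hyb h1, hyc h1]
  -- Step 2: the link covering the edge above v
  obtain ⟨p0, hp0⟩ := st6_exists_path hT.isConnected v r
  have hstep : ∃ pv, ∃ _ : T.Adj v pv, ∃ pr' : T.Walk pv r, pr'.IsPath ∧ v ∉ pr'.support := by
    cases p0 with
    | nil => exact absurd rfl hv
    | cons h q =>
      exact ⟨_, h, q, ((Walk.cons_isPath_iff h q).mp hp0).1, ((Walk.cons_isPath_iff h q).mp hp0).2⟩
  obtain ⟨pv, hadjv, pr', hpr', hvpr⟩ := hstep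
  obtain ⟨l2, hl2F, hl2cov⟩ := hF.2.1 s(v, pv) hadjv
  rw [Finset.mem_coe] at hl2F
  obtain ⟨x1, x2, hl2eq, hmem2⟩ := hl2cov
  obtain ⟨p2, hp2, hep2⟩ := hmem2
  have hvsup : v ∈ p2.support := p2.fst_mem_support_of_mem_edges hep2
  have hnd2 : ((p2.takeUntil v hvsup).edges ++ (p2.dropUntil v hvsup).edges).Nodup := by
    rw [← Walk.edges_append, Walk.take_spec]
    exact Walk.edges_nodup_of_support_nodup hp2.support_nodup
  have hdisj2 := List.disjoint_of_nodup_append hnd2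
  have hsplit : s(v, pv) ∈ (p2.takeUntil v hvsup).edges ∨
      s(v, pv) ∈ (p2.dropUntil v hvsup).edges := by
    rw [← List.mem_append, ← Walk.edges_append, Walk.take_spec]
    exact hep2
  have hkey : ∃ u2 w2, l2 = s(u2, w2) ∧ InSubtree T r v u2 ∧ ¬ InSubtree T r v w2 := by
    rcases hsplit with hin | hin
    · refine ⟨x2, x1, hl2eq.trans Sym2.eq_swap, ?_, ?_⟩
      · exact st6_insubtree_of_side hT hadjv hpr' hvpr ((hp2.dropUntil hvsup).reverse)
          (fun h => hdisj2 hin (by rwa [Walk.edges_reverse, List.mem_reverse] at h))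
      · exact st6_not_insubtree_of_side hT hadjv hpr' hvpr
          ⟨(p2.takeUntil v hvsup).reverse, (hp2.takeUntil hvsup).reverse,
            by rw [Walk.edges_reverse, List.mem_reverse]; exact hin⟩
    · refine ⟨x1, x2, hl2eq, ?_, ?_⟩
      · exact st6_insubtree_of_side hT hadjv hpr' hvpr (hp2.takeUntil hvsup)
          (fun h => hdisj2 h hin)
      · exact st6_not_insubtree_of_side hT hadjv hpr' hvpr
          ⟨p2.dropUntil v hvsup, hp2.dropUntil hvsup, hin⟩
  obtain ⟨u2, w2, hl2uw, hu2in, hw2out⟩ := hkey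
  have hu2l2 : u2 ∈ l2 := by rw [hl2uw]; exact Sym2.mem_mk_left _ _
  have hw2l2 : w2 ∈ l2 := by rw [hl2uw]; exact Sym2.mem_mk_right _ _
  have hu2c : u2 ≠ c := fun h => hw2out (hclosed l2 (hF.1 hl2F) (h ▸ hu2l2) w2 hw2l2)
  have hw2a : w2 ≠ a := fun h => hw2out (h ▸ haa.2)
  have hw2b : w2 ≠ b := fun h => hw2out (h ▸ hbb.2)
  have hw2c : w2 ≠ c := fun h => hw2out (h ▸ hca.2)
  have hw2s : w2 ≠ s := fun h => hw2out (h ▸ hsv)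
  have hu2a : u2 ≠ a := by
    intro h
    exact st6_no_extra hT hF habF hpa.1 hnba hts (z := w2) hw2a hw2s hw2b
      (by rw [← h, ← hl2uw]; exact hl2F)
  have hu2b : u2 ≠ b := by
    intro h
    exact st6_no_extra hT hF habF' hpb.1 hnbb htsb (z := w2) hw2b hw2s hw2a
      (by rw [← h, ← hl2uw]; exact hl2F)
  have hu2NL : ¬ IsLeaf T u2 := by
    intro h
    rcases (hleaves u2).mp ⟨h, hu2in⟩ with h1 | h1 | h1
    exacts [hu2a h1, hu2b h1, hu2c h1]
  have hl12 : l1 ≠ l2 := by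
    intro h
    rw [h, hl2uw, Sym2.mem_iff] at hcl1
    rcases hcl1 with h1 | h1
    exacts [hu2c h1.symm, hw2c h1.symm]
  -- Final counting
  have key : ∀ x, InSubtree T r v x → ¬ IsLeaf T x →
      (if InSubtree T r v x ∧ ¬ IsLeaf T x then degF F x else 0) = degF F x :=
    fun x h1 h2 => if_pos ⟨h1, h2⟩
  by_cases hyu : y = u2
  · have h2 : 2 ≤ degF F y := by
      have hsub : {l1, l2} ⊆ F.filter (fun e => y ∈ e) := by
        intro l hl
        rcases Finset.mem_insert.mp hl with rfl | hl
        · exact Finset.mem_filter.mpr ⟨hl1F, hyl1⟩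
        · rw [Finset.mem_singleton] at hl
          subst hl
          exact Finset.mem_filter.mpr ⟨hl2F, hyu ▸ hu2l2⟩
      calc 2 = ({l1, l2} : Finset (Sym2 V)).card := (Finset.card_pair hl12).symm
        _ ≤ _ := Finset.card_le_card hsub
    calc (2 : ℕ) ≤ degF F y := h2
      _ = (if InSubtree T r v y ∧ ¬ IsLeaf T y then degF F y else 0) := (key y hyT hyNL).symm
      _ ≤ _ := Finset.single_le_sum (f := fun x =>
          if InSubtree T r v x ∧ ¬ IsLeaf T x then degF F x else 0)
          (fun i _ => Nat.zero_le _) (Finset.mem_univ y)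
  · have h1 : 1 ≤ degF F y :=
      Finset.card_pos.mpr ⟨l1, Finset.mem_filter.mpr ⟨hl1F, hyl1⟩⟩
    have h2 : 1 ≤ degF F u2 :=
      Finset.card_pos.mpr ⟨l2, Finset.mem_filter.mpr ⟨hl2F, hu2l2⟩⟩
    calc (2 : ℕ) ≤ (if InSubtree T r v y ∧ ¬ IsLeaf T y then degF F y else 0) +
          (if InSubtree T r v u2 ∧ ¬ IsLeaf T u2 then degF F u2 else 0) := by
          rw [key y hyT hyNL, key u2 hu2in hu2NL]; omega
      _ = ∑ x ∈ ({y, u2} : Finset V),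
            (if InSubtree T r v x ∧ ¬ IsLeaf T x then degF F x else 0) :=
          (Finset.sum_pair (f := fun x =>
            if InSubtree T r v x ∧ ¬ IsLeaf T x then degF F x else 0) hyu).symm
      _ ≤ _ := Finset.sum_le_sum_of_subset (Finset.subset_univ _)
end

section
/- Let T be a tree rooted at r with a shadow-closed link set E, and let F ⊆ E be a shadows-minimal feasible cover of T. Let v ≠ r be a vertex such that the subtree T_v has exactly three leaves a, b, c, the subtree T_v contains no stem, ab ∈ E, and T_v is c-closed. If ab ∈ F, then Σ_{x ∈ T_v ∖ L} deg_F(x) ≥ 2. -/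
open scoped Classical

/-!
Because `ab ∈ F` joins two leaves, shadows-minimality leaves no other link of `F` at `a` or
at `b`: were `az ∈ F` with `z ≠ a, b`, replacing `ab` by its shadow from `b` to the neighbour of
`a` would keep `F` feasible, the edge at `a` being covered by `az`. Now look at the link of `F`
covering the leaf edge of `c` and at the one covering the edge from `v` to its parent. The first
is `cy` with `y ∈ T_v` by `c`-closedness; the second has one endpoint `x` inside `T_v` and one
outside. Neither `y` nor `x` can be a leaf `a`, `b` (the link would have to be `ab`) or `c`, so
they are internal vertices of `T_v`, and the two links are distinct.
-/

open SimpleGraph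

section Tree

variable {V : Type*} {T : SimpleGraph V}

lemma mem_pathEdges_iff (hT : T.IsTree) {u w : V} {p : T.Walk u w} (hp : p.IsPath)
    {e : Sym2 V} : e ∈ pathEdges T u w ↔ e ∈ p.edges :=
  ⟨fun ⟨_, hq, he⟩ => (hT.existsUnique_path u w).unique hq hp ▸ he, fun he => ⟨p, hp, he⟩⟩

lemma pathEdges_comm (u w : V) : pathEdges T u w = pathEdges T w u := by
  ext e
  constructor <;> rintro ⟨p, hp, he⟩ <;>
    exact ⟨p.reverse, hp.reverse, by simpa [Walk.edges_reverse] using he⟩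

lemma pathEdges_self (u : V) : pathEdges T u u = ∅ := by
  refine Set.eq_empty_of_forall_notMem fun e ⟨p, hp, he⟩ => ?_
  rw [Walk.eq_nil_iff_nil.mpr (Walk.isPath_iff_nil.mp hp)] at he
  simp at he

lemma covers_mk_iff {u w : V} {e : Sym2 V} : Covers T s(u, w) e ↔ e ∈ pathEdges T u w := by
  refine ⟨fun ⟨x, y, hxy, he⟩ => ?_, fun he => ⟨u, w, rfl, he⟩⟩
  rcases Sym2.eq_iff.mp hxy with ⟨rfl, rfl⟩ | ⟨rfl, rfl⟩
  · exact he
  · rwa [pathEdges_comm]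

lemma IsLeaf.eq_or_eq_of_mem_support {x u w : V} (hx : IsLeaf T x) {p : T.Walk u w}
    (hp : p.IsPath) (hxp : x ∈ p.support) : x = u ∨ x = w := by
  by_contra! hne
  obtain ⟨n, -, hn⟩ := hx
  obtain ⟨y₁, h₁, A, hA⟩ := Walk.exists_eq_cons_of_ne hne.1 (p.takeUntil x hxp).reverse
  obtain ⟨y₂, h₂, B, hB⟩ := Walk.exists_eq_cons_of_ne hne.2 (p.dropUntil x hxp)
  have h₁ : s(x, n) ∈ (p.takeUntil x hxp).edges := by
    rw [← List.mem_reverse, ← Walk.edges_reverse, hA, ← hn y₁ h₁]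
    simp
  have h₂ : s(x, n) ∈ (p.dropUntil x hxp).edges := by
    rw [hB, ← hn y₂ h₂]
    simp
  have hnodup := hp.isTrail.edges_nodup
  rw [← p.take_spec hxp, Walk.edges_append] at hnodup
  exact List.disjoint_of_nodup_append hnodup h₁ h₂

lemma IsLeaf.exists_eq_of_covers {c n : V} {l : Sym2 V} (hc : IsLeaf T c)
    (hl : Covers T l s(c, n)) : ∃ y, y ≠ c ∧ l = s(c, y) := by
  obtain ⟨u, w, rfl, he⟩ := hl
  have huw : u ≠ w := by
    rintro rfl
    simp [pathEdges_self] at he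
  obtain ⟨p, hp, hep⟩ := he
  rcases hc.eq_or_eq_of_mem_support hp (p.fst_mem_support_of_mem_edges hep) with rfl | rfl
  · exact ⟨w, huw.symm, rfl⟩
  · exact ⟨u, huw, Sym2.eq_swap⟩

lemma IsLeaf.pathEdges_eq (hT : T.IsTree) {a a' x : V} (ha : IsLeaf T a) (haa' : T.Adj a a')
    (hxa : x ≠ a) : pathEdges T a x = insert s(a, a') (pathEdges T a' x) := by
  obtain ⟨P, hP⟩ := (hT.existsUnique_path a x).exists
  obtain ⟨w, haw, Q, rfl⟩ := Walk.exists_eq_cons_of_ne hxa.symm P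
  obtain rfl : w = a' := ExistsUnique.unique ha haw haa'
  ext e
  rw [Set.mem_insert_iff, mem_pathEdges_iff hT hP, mem_pathEdges_iff hT hP.of_cons,
    Walk.edges_cons, List.mem_cons]

lemma ShadowsMinimal.eq_of_leaf_links_mem (hT : T.IsTree) {E F : Finset (Sym2 V)}
    (hF : ShadowsMinimal T E F) {a b z : V} (ha : IsLeaf T a) (hb : IsLeaf T b) (hab : a ≠ b)
    (habF : s(a, b) ∈ F) (hazF : s(a, z) ∈ F) (hza : z ≠ a) : z = b := by
  by_contra hzb
  obtain ⟨a', haa'⟩ := ExistsUnique.exists ha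
  have hab' := ha.pathEdges_eq hT haa' hab.symm
  have haz := ha.pathEdges_eq hT haa' hza
  have hba' : b ≠ a' := by
    rintro rfl
    obtain ⟨P, hP⟩ := (hT.existsUnique_path a z).exists
    have hbP : s(a, b) ∈ P.edges := (mem_pathEdges_iff hT hP).mp (haz ▸ Set.mem_insert _ _)
    rcases hb.eq_or_eq_of_mem_support hP (P.snd_mem_support_of_mem_edges hbP) with h | h
    exacts [hab h.symm, hzb h.symm]
  have hnot : s(a, a') ∉ pathEdges T a' b := by
    rintro ⟨P, hP, he⟩
    rcases ha.eq_or_eq_of_mem_support hP (P.fst_mem_support_of_mem_edges he) with h | h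
    exacts [haa'.ne h, hab h]
  have hshadow : IsShadow T b a' a b :=
    ⟨hba', by rw [pathEdges_comm, hab']; exact Set.ssubset_insert hnot⟩
  refine hF.2.2.2 a b b a' habF hshadow fun e he => ?_
  obtain ⟨l, hlF, hle⟩ := hF.2.1 e he
  by_cases hl : l = s(a, b)
  · subst hl
    rw [covers_mk_iff, hab', Set.mem_insert_iff] at hle
    rcases hle with rfl | hle
    · have hne : s(a, z) ≠ s(a, b) := fun h => hzb (Sym2.congr_right.mp h)
      exact ⟨s(a, z), Finset.mem_insert_of_mem (Finset.mem_erase.mpr ⟨hne, hazF⟩),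
        covers_mk_iff.mpr (haz ▸ Set.mem_insert _ _)⟩
    · exact ⟨s(b, a'), Finset.mem_insert_self _ _, covers_mk_iff.mpr (by rwa [pathEdges_comm])⟩
  · exact ⟨l, Finset.mem_insert_of_mem (Finset.mem_erase.mpr ⟨hl, hlF⟩), hle⟩

lemma ShadowsMinimal.mem_pair_of_leaf_links_mem (hT : T.IsTree) {E F : Finset (Sym2 V)}
    (hF : ShadowsMinimal T E F) {a b : V} (ha : IsLeaf T a) (hb : IsLeaf T b) (hab : a ≠ b)
    (habF : s(a, b) ∈ F) {u w : V} (hu : u = a ∨ u = b) (huwF : s(u, w) ∈ F) (hwu : w ≠ u) :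
    w = a ∨ w = b := by
  rcases hu with rfl | rfl
  · exact Or.inr (hF.eq_of_leaf_links_mem hT ha hb hab habF huwF hwu)
  · exact Or.inl (hF.eq_of_leaf_links_mem hT hb ha hab.symm (Sym2.eq_swap ▸ habF) huwF hwu)

end Tree

section Subtree

variable {V : Type*} {T : SimpleGraph V} {r v v' : V} {R : T.Walk v' r}

-- `v'` is the parent of `v`: the tree path from `v` to the root is `Walk.cons hvv' R`.

lemma inSubtree_iff_not_mem_edges (hT : T.IsTree) (hvv' : T.Adj v v')
    (hP : (Walk.cons hvv' R).IsPath) {x : V} {A : T.Walk x v} (hA : A.IsPath) :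
    InSubtree T r v x ↔ s(v, v') ∉ A.edges := by
  constructor
  · rintro ⟨P, hP', hvP⟩
    have hA' : P.takeUntil v hvP = A := (hT.existsUnique_path x v).unique (hP'.takeUntil hvP) hA
    have hR : P.dropUntil v hvP = Walk.cons hvv' R :=
      (hT.existsUnique_path v r).unique (hP'.dropUntil hvP) hP
    have hnodup := hP'.isTrail.edges_nodup
    rw [← P.take_spec hvP, Walk.edges_append, hA', hR] at hnodup
    exact fun he => List.disjoint_of_nodup_append hnodup he (by simp)
  · intro he
    obtain ⟨P, hP'⟩ := (hT.existsUnique_path x r).exists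
    have hbypass : (A.reverse.append P).bypass = Walk.cons hvv' R :=
      (hT.existsUnique_path v r).unique (A.reverse.append P).bypass_isPath hP
    have hvv'P : s(v, v') ∈ (A.reverse.append P).edges :=
      (A.reverse.append P).edges_bypass_subset_edges (by simp [hbypass])
    rw [Walk.edges_append, List.mem_append, Walk.edges_reverse, List.mem_reverse] at hvv'P
    exact ⟨P, hP', P.fst_mem_support_of_mem_edges (hvv'P.resolve_left he)⟩

lemma inSubtree_iff_not_inSubtree (hT : T.IsTree) (hvv' : T.Adj v v')
    (hP : (Walk.cons hvv' R).IsPath) {p q : V} (he : s(v, v') ∈ pathEdges T p q) :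
    InSubtree T r v p ↔ ¬ InSubtree T r v q := by
  obtain ⟨W, hW, heW⟩ := he
  have hvW := W.fst_mem_support_of_mem_edges heW
  rw [inSubtree_iff_not_mem_edges hT hvv' hP (hW.takeUntil hvW),
    inSubtree_iff_not_mem_edges hT hvv' hP (hW.dropUntil hvW).reverse, Walk.edges_reverse,
    List.mem_reverse, not_not]
  have hnodup := hW.isTrail.edges_nodup
  rw [← W.take_spec hvW, Walk.edges_append] at hnodup heW
  exact ⟨(List.mem_append.mp heW).resolve_left, fun hB hA =>
    List.disjoint_of_nodup_append hnodup hA hB⟩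

lemma exists_inSubtree_of_covers (hT : T.IsTree) (hvv' : T.Adj v v')
    (hP : (Walk.cons hvv' R).IsPath) {l : Sym2 V} (hl : Covers T l s(v, v')) :
    ∃ x z, l = s(x, z) ∧ InSubtree T r v x ∧ ¬ InSubtree T r v z := by
  obtain ⟨p, q, rfl, he⟩ := hl
  have hpq := inSubtree_iff_not_inSubtree hT hvv' hP he
  by_cases hp : InSubtree T r v p
  · exact ⟨p, q, rfl, hp, hpq.mp hp⟩
  · exact ⟨q, p, Sym2.eq_swap, not_not.mp (mt hpq.mpr hp), hp⟩

end Subtree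

lemma card_le_sum_degF {V : Type*} [Fintype V] (F : Finset (Sym2 V)) (P : V → Prop)
    [DecidablePred P] {S : Finset (Sym2 V)} (hSF : S ⊆ F) (hSP : ∀ l ∈ S, ∃ x ∈ l, P x) :
    S.card ≤ ∑ x : V, if P x then degF F x else 0 := by
  rw [← Finset.sum_filter]
  calc S.card ≤ ((Finset.univ.filter P).biUnion fun x => F.filter (x ∈ ·)).card := by
        refine Finset.card_le_card fun l hl => ?_
        obtain ⟨x, hxl, hx⟩ := hSP l hl
        simp only [Finset.mem_biUnion, Finset.mem_filter, Finset.mem_univ, true_and]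
        exact ⟨x, hx, hSF hl, hxl⟩
    _ ≤ _ := Finset.card_biUnion_le

theorem statement7_general {V : Type*} [Fintype V] (T : SimpleGraph V) (hT : T.IsTree) (r : V)
    (E F : Finset (Sym2 V))
    (hF : ShadowsMinimal T E F)
    (v : V) (hv : v ≠ r) (a b c : V)
    (hab : a ≠ b) (hac : a ≠ c) (hbc : b ≠ c)
    (hleaves : ∀ x, (IsLeaf T x ∧ InSubtree T r v x) ↔ (x = a ∨ x = b ∨ x = c))
    (hclosed : XClosed T r E v c) :
    s(a, b) ∈ F →
      2 ≤ ∑ x : V, (if InSubtree T r v x ∧ ¬ IsLeaf T x then degF F x else 0) := by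
  intro habF
  obtain ⟨ha, hav⟩ := (hleaves a).mpr (by simp)
  obtain ⟨hb, hbv⟩ := (hleaves b).mpr (by simp)
  obtain ⟨hc, hcv⟩ := (hleaves c).mpr (by simp)
  have not_isLeaf_of_link : ∀ u w, s(u, w) ∈ F → InSubtree T r v u → w ≠ u → w ≠ a → w ≠ b → u ≠ c →
      ¬ IsLeaf T u := fun u w huwF huv hwu hwa hwb huc hu => by
    have hu : u = a ∨ u = b := ((hleaves u).mp ⟨hu, huv⟩).imp_right (·.resolve_right huc)
    exact (hF.mem_pair_of_leaf_links_mem hT ha hb hab habF hu huwF hwu).elim hwa hwb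
  obtain ⟨n, hcn⟩ := ExistsUnique.exists hc
  obtain ⟨l₁, hl₁F, hl₁⟩ := hF.2.1 s(c, n) hcn
  obtain ⟨y, hyc, rfl⟩ := hc.exists_eq_of_covers hl₁
  have hyv := hclosed _ (hF.1 hl₁F) (Sym2.mem_mk_left c y) y (Sym2.mem_mk_right c y)
  have hy := not_isLeaf_of_link y c (Sym2.eq_swap ▸ hl₁F) hyv hyc.symm hac.symm hbc.symm hyc
  obtain ⟨P, hP⟩ := (hT.existsUnique_path v r).exists
  obtain ⟨v', hvv', R, rfl⟩ := Walk.exists_eq_cons_of_ne hv P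
  obtain ⟨l₂, hl₂F, hl₂⟩ := hF.2.1 s(v, v') hvv'
  obtain ⟨x, z, rfl, hxv, hzv⟩ := exists_inSubtree_of_covers hT hvv' hP hl₂
  have hxc : x ≠ c := fun h =>
    hzv (hclosed _ (hF.1 hl₂F) (h ▸ Sym2.mem_mk_left x z) z (Sym2.mem_mk_right x z))
  have hx := not_isLeaf_of_link x z hl₂F hxv (by rintro rfl; exact hzv hxv) (by rintro rfl; exact hzv hav)
    (by rintro rfl; exact hzv hbv) hxc
  have hne : s(c, y) ≠ s(x, z) := fun h => by
    rcases Sym2.mem_iff.mp (h ▸ Sym2.mem_mk_right x z) with rfl | rfl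
    exacts [hzv hcv, hzv hyv]
  calc 2 = ({s(c, y), s(x, z)} : Finset (Sym2 V)).card := (Finset.card_pair hne).symm
    _ ≤ _ := by
      refine card_le_sum_degF F _
        (Finset.insert_subset_iff.mpr ⟨hl₁F, Finset.singleton_subset_iff.mpr hl₂F⟩) ?_
      simp only [Finset.mem_insert, Finset.mem_singleton, forall_eq_or_imp, forall_eq]
      exact ⟨⟨y, Sym2.mem_mk_right c y, hyv, hy⟩, ⟨x, Sym2.mem_mk_left x z, hxv, hx⟩⟩

/-- if `T_v` (`v ≠ r`) has exactly three leaves `a, b, c`, contains no stem,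
`ab ∈ E`, and `T_v` is `c`-closed, then `ab ∈ F` implies
`Σ_{x ∈ T_v ∖ L} deg_F(x) ≥ 2`. -/
theorem statement7 {V : Type*} [Fintype V] (T : SimpleGraph V) (hT : T.IsTree) (r : V)
    (hr : ¬ IsLeaf T r) (E F : Finset (Sym2 V))
    (hlinks : ∀ l ∈ E, ¬ l.IsDiag)
    (hE : ShadowClosed T E)
    (hF : ShadowsMinimal T E F)
    (v : V) (hv : v ≠ r) (a b c : V)
    (hab : a ≠ b) (hac : a ≠ c) (hbc : b ≠ c)
    (hleaves : ∀ x, (IsLeaf T x ∧ InSubtree T r v x) ↔ (x = a ∨ x = b ∨ x = c))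
    (hnostem : ¬ ∃ s a' b', InSubtree T r v s ∧ IsStem T r E s a' b')
    (habE : s(a, b) ∈ E)
    (hclosed : XClosed T r E v c) :
    s(a, b) ∈ F →
      2 ≤ ∑ x : V, (if InSubtree T r v x ∧ ¬ IsLeaf T x then degF F x else 0) :=
  statement7_general T hT r E F hF v hv a b c hab hac hbc hleaves hclosed
end
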